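/- Let a ∼ N(0, l⁻² I_p) and b ∼ Uniform[0, 2π] be independent. Then for the random Fourier feature pair, E[2 cos(aᵀx + b) cos(aᵀx' + b)] = e^{−‖x − x'‖₂² / (2 l²)}, i.e., the random Fourier feature estimator is an unbiased estimator of the Gaussian RBF kernel. -/

import Mathlib

/-!
Averaging over the phase `b` kills the `cos (u + v + 2b)` term of
`2 cos (u + b) cos (v + b) = cos (u - v) + cos (u + v + 2b)`, leaving `cos (aᵀ(x - x'))`.
Its Gaussian expectation is the real part of a product of one-dimensional Gaussian
characteristic functions.
-/

open Matrix MeasureTheory ProbabilityTheory Real Set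

noncomputable def uniformPhase : Measure ℝ :=
  (ENNReal.ofReal (2 * π))⁻¹ • volume.restrict (Icc 0 (2 * π))

instance isProbabilityMeasure_uniformPhase : IsProbabilityMeasure uniformPhase := by
  constructor
  rw [uniformPhase, Measure.smul_apply, Measure.restrict_apply_univ, Real.volume_Icc, sub_zero,
    smul_eq_mul, ENNReal.inv_mul_cancel (by simp [pi_pos]) ENNReal.ofReal_ne_top]

lemma integral_uniformPhase (f : ℝ → ℝ) :
    ∫ b, f b ∂uniformPhase = (2 * π)⁻¹ * ∫ b in 0..2 * π, f b := by
  rw [uniformPhase, integral_smul_measure, integral_Icc_eq_integral_Ioc,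
    ← intervalIntegral.integral_of_le two_pi_pos.le, ENNReal.toReal_inv,
    ENNReal.toReal_ofReal two_pi_pos.le, smul_eq_mul]

lemma integral_uniformPhase_cos_add_two_mul (c : ℝ) :
    ∫ b, cos (c + 2 * b) ∂uniformPhase = 0 := by
  rw [integral_uniformPhase, intervalIntegral.integral_comp_add_mul cos two_ne_zero, integral_cos,
    show c + 2 * (2 * π) = c + 2 * π + 2 * π by ring, sin_add_two_pi, sin_add_two_pi]
  simp

lemma integral_uniformPhase_two_mul_cos_mul_cos (u v : ℝ) :
    ∫ b, 2 * cos (u + b) * cos (v + b) ∂uniformPhase = cos (u - v) := by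
  have hsplit (b : ℝ) :
      2 * cos (u + b) * cos (v + b) = cos (u - v) + cos (u + v + 2 * b) := by
    rw [two_mul_cos_mul_cos]
    ring_nf
  have hint : Integrable (fun b => cos (u + v + 2 * b)) uniformPhase :=
    (integrable_const (1 : ℝ)).mono (by fun_prop) (by simp [abs_cos_le_one])
  simp_rw [hsplit, integral_add (integrable_const _) hint,
    integral_uniformPhase_cos_add_two_mul, integral_const, probReal_univ]
  simp

open Complex in
lemma integral_cexp_dotProduct_mul_I_pi_eq_prod_charFun {ι : Type*} [Fintype ι]
    (μ : ι → Measure ℝ) [∀ i, SigmaFinite (μ i)] (c : ι → ℝ) :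
    ∫ a, cexp ((a ⬝ᵥ c : ℝ) * I) ∂(Measure.pi μ) = ∏ i, charFun (μ i) (c i) := by
  simp_rw [charFun_apply_real, ← integral_fintype_prod_eq_prod, ← Complex.exp_sum,
    dotProduct, ofReal_sum, Finset.sum_mul, ofReal_mul, mul_comm]

open Complex in
lemma integral_cos_dotProduct_pi_gaussianReal {ι : Type*} [Fintype ι] (v : NNReal) (c : ι → ℝ) :
    ∫ a, Real.cos (a ⬝ᵥ c) ∂(Measure.pi fun _ : ι => gaussianReal 0 v)
      = Real.exp (-(v * (c ⬝ᵥ c)) / 2) := by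
  have hint : Integrable (fun a : ι → ℝ => cexp ((a ⬝ᵥ c : ℝ) * I))
      (Measure.pi fun _ : ι => gaussianReal 0 v) :=
    (integrable_const (1 : ℝ)).mono (by fun_prop) (by simp [norm_exp_ofReal_mul_I])
  have hexponent : ∑ i, ((c i : ℂ) * (0 : ℝ) * I - (v : ℝ) * (c i : ℂ) ^ 2 / 2)
      = ((-(v * (c ⬝ᵥ c)) / 2 : ℝ) : ℂ) := by
    push_cast [dotProduct, Finset.mul_sum, Finset.sum_div, ← Finset.sum_neg_distrib]
    exact Finset.sum_congr rfl fun i _ => by ring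
  calc ∫ a, Real.cos (a ⬝ᵥ c) ∂(Measure.pi fun _ : ι => gaussianReal 0 v)
      = (∫ a, cexp ((a ⬝ᵥ c : ℝ) * I) ∂(Measure.pi fun _ : ι => gaussianReal 0 v)).re := by
        simp_rw [← exp_ofReal_mul_I_re]
        exact integral_re hint
    _ = Real.exp (-(v * (c ⬝ᵥ c)) / 2) := by
        simp_rw [integral_cexp_dotProduct_mul_I_pi_eq_prod_charFun, charFun_gaussianReal,
          ← Complex.exp_sum, hexponent, exp_ofReal_re]

theorem random_fourier_features_unbiased_general
    {p : ℕ} (l : NNReal) (x x' : Fin p → ℝ) :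
    ∫ ab : (Fin p → ℝ) × ℝ,
        2 * Real.cos (ab.1 ⬝ᵥ x + ab.2) * Real.cos (ab.1 ⬝ᵥ x' + ab.2)
      ∂((Measure.pi fun _ : Fin p => gaussianReal 0 (l⁻¹ ^ 2)).prod
          ((ENNReal.ofReal (2 * Real.pi))⁻¹ •
            volume.restrict (Set.Icc (0 : ℝ) (2 * Real.pi))))
      = Real.exp (-((x - x') ⬝ᵥ (x - x')) / (2 * (l : ℝ) ^ 2)) := by
  change ∫ ab, _ ∂((Measure.pi fun _ : Fin p => gaussianReal 0 (l⁻¹ ^ 2)).prod uniformPhase) = _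
  have hint : Integrable (fun ab : (Fin p → ℝ) × ℝ =>
      2 * cos (ab.1 ⬝ᵥ x + ab.2) * cos (ab.1 ⬝ᵥ x' + ab.2))
      ((Measure.pi fun _ : Fin p => gaussianReal 0 (l⁻¹ ^ 2)).prod uniformPhase) :=
    (integrable_const (2 : ℝ)).mono (by fun_prop) (ae_of_all _ fun ab => by
      rw [norm_mul, norm_mul, mul_assoc]
      simpa using mul_le_one₀ (abs_cos_le_one _) (abs_nonneg _) (abs_cos_le_one _))
  simp_rw [integral_prod _ hint, integral_uniformPhase_two_mul_cos_mul_cos, ← dotProduct_sub,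
    integral_cos_dotProduct_pi_gaussianReal]
  congr 1
  push_cast
  ring

/-- Unbiasedness of random Fourier features for the Gaussian RBF kernel:
with `a ∼ N(0, l⁻² I_p)` (independent `N(0, l⁻²)` coordinates) and
`b ∼ Uniform[0, 2π]` independent of `a`,
`E[2 cos(aᵀx + b) cos(aᵀx' + b)] = exp(−‖x − x'‖₂² / (2l²))`. -/
theorem random_fourier_features_unbiased
    {p : ℕ} (l : NNReal) (hl : 0 < l) (x x' : Fin p → ℝ) :
    ∫ ab : (Fin p → ℝ) × ℝ,
        2 * Real.cos (ab.1 ⬝ᵥ x + ab.2) * Real.cos (ab.1 ⬝ᵥ x' + ab.2)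
      ∂((Measure.pi fun _ : Fin p => gaussianReal 0 (l⁻¹ ^ 2)).prod
          ((ENNReal.ofReal (2 * Real.pi))⁻¹ •
            volume.restrict (Set.Icc (0 : ℝ) (2 * Real.pi))))
      = Real.exp (-((x - x') ⬝ᵥ (x - x')) / (2 * (l : ℝ) ^ 2)) :=
  random_fourier_features_unbiased_general l x x'
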